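/- Let W¹, W² : ℝ² → ℝ be smooth functions with ∂_y W¹ < 0 and ∂_x W² < 0 everywhere, satisfying the system ∂_x∂_y W¹ = −(∂_y W¹)(∂_x W² + e^{W¹}) and ∂_x∂_y W² = −(∂_x W²)(e^{W²} + ∂_y W¹). Define U¹ := (2/3)W¹ + (1/3)W² + (1/3)·log( −(∂_y W¹)² (∂_x W²) ) and U² := (1/3)W¹ + (2/3)W² + (1/3)·log( −(∂_y W¹)(∂_x W²)² ). Then (U¹, U²) is a solution of the A₂ Toda system: ∂_x∂_y U¹ = exp(2U¹ − U²) and ∂_x∂_y U² = exp(−U¹ + 2U²). -/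

import Mathlib

noncomputable section
open Real

/-- Partial derivative with respect to the first variable. -/
def pdx (f : ℝ → ℝ → ℝ) (x y : ℝ) : ℝ := deriv (fun t => f t y) x
/-- Partial derivative with respect to the second variable. -/
def pdy (f : ℝ → ℝ → ℝ) (x y : ℝ) : ℝ := deriv (fun t => f x t) y

abbrev Sm (f : ℝ → ℝ → ℝ) : Prop := ContDiff ℝ (⊤ : ℕ∞) (fun p : ℝ × ℝ => f p.1 p.2)

lemma hasDerivAt_pdx {f : ℝ → ℝ → ℝ} (hf : Sm f) (x y : ℝ) :
    HasDerivAt (fun t => f t y) (pdx f x y) x := by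
  have h : DifferentiableAt ℝ (fun t => f t y) x := by
    have h1 := (hf.differentiable (by simp)).differentiableAt (x := (x, y))
    have h2 : DifferentiableAt ℝ (fun t : ℝ => ((t, y) : ℝ × ℝ)) x :=
      differentiableAt_id.prodMk (differentiableAt_const y)
    exact h1.comp x h2
  simpa [pdx] using h.hasDerivAt

lemma hasDerivAt_pdy {f : ℝ → ℝ → ℝ} (hf : Sm f) (x y : ℝ) :
    HasDerivAt (fun t => f x t) (pdy f x y) y := by
  have h : DifferentiableAt ℝ (fun t => f x t) y := by
    have h1 := (hf.differentiable (by simp)).differentiableAt (x := (x, y))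
    have h2 : DifferentiableAt ℝ (fun t : ℝ => ((x, t) : ℝ × ℝ)) y :=
      (differentiableAt_const x).prodMk differentiableAt_id
    exact h1.comp y h2
  simpa [pdy] using h.hasDerivAt

lemma pdx_eq_fderiv {f : ℝ → ℝ → ℝ} (hf : Sm f) (x y : ℝ) :
    pdx f x y = fderiv ℝ (fun p : ℝ × ℝ => f p.1 p.2) (x, y) (1, 0) := by
  have h1 : HasFDerivAt (fun p : ℝ × ℝ => f p.1 p.2)
      (fderiv ℝ (fun p : ℝ × ℝ => f p.1 p.2) (x, y)) (x, y) :=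
    ((hf.differentiable (by simp)) (x, y)).hasFDerivAt
  have h2 : HasDerivAt (fun t : ℝ => ((t, y) : ℝ × ℝ)) (1, 0) x := by
    simpa using (hasDerivAt_id x).prodMk (hasDerivAt_const x y)
  have := h1.comp_hasDerivAt x h2
  exact this.deriv

lemma pdy_eq_fderiv {f : ℝ → ℝ → ℝ} (hf : Sm f) (x y : ℝ) :
    pdy f x y = fderiv ℝ (fun p : ℝ × ℝ => f p.1 p.2) (x, y) (0, 1) := by
  have h1 : HasFDerivAt (fun p : ℝ × ℝ => f p.1 p.2)
      (fderiv ℝ (fun p : ℝ × ℝ => f p.1 p.2) (x, y)) (x, y) :=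
    ((hf.differentiable (by simp)) (x, y)).hasFDerivAt
  have h2 : HasDerivAt (fun t : ℝ => ((x, t) : ℝ × ℝ)) (0, 1) y := by
    simpa using (hasDerivAt_const y x).prodMk (hasDerivAt_id y)
  have := h1.comp_hasDerivAt y h2
  exact this.deriv

lemma sm_pdx {f : ℝ → ℝ → ℝ} (hf : Sm f) : Sm (pdx f) := by
  have h : ContDiff ℝ (⊤ : ℕ∞) (fun p : ℝ × ℝ =>
      fderiv ℝ (fun p : ℝ × ℝ => f p.1 p.2) p ((1 : ℝ), (0 : ℝ))) :=
    (hf.fderiv_right (by simp)).clm_apply contDiff_const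
  have eq : (fun p : ℝ × ℝ => pdx f p.1 p.2)
      = fun p : ℝ × ℝ => fderiv ℝ (fun p : ℝ × ℝ => f p.1 p.2) p ((1 : ℝ), (0 : ℝ)) :=
    funext fun p => pdx_eq_fderiv hf p.1 p.2
  show ContDiff ℝ (⊤ : ℕ∞) _
  rw [eq]; exact h

lemma sm_pdy {f : ℝ → ℝ → ℝ} (hf : Sm f) : Sm (pdy f) := by
  have h : ContDiff ℝ (⊤ : ℕ∞) (fun p : ℝ × ℝ =>
      fderiv ℝ (fun p : ℝ × ℝ => f p.1 p.2) p ((0 : ℝ), (1 : ℝ))) :=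
    (hf.fderiv_right (by simp)).clm_apply contDiff_const
  have eq : (fun p : ℝ × ℝ => pdy f p.1 p.2)
      = fun p : ℝ × ℝ => fderiv ℝ (fun p : ℝ × ℝ => f p.1 p.2) p ((0 : ℝ), (1 : ℝ)) :=
    funext fun p => pdy_eq_fderiv hf p.1 p.2
  show ContDiff ℝ (⊤ : ℕ∞) _
  rw [eq]; exact h

lemma pdx_pdy_comm {f : ℝ → ℝ → ℝ} (hf : Sm f) (x y : ℝ) :
    pdx (pdy f) x y = pdy (pdx f) x y := by
  set F := fun p : ℝ × ℝ => f p.1 p.2 with hF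
  have hdf : ∀ p : ℝ × ℝ, HasFDerivAt F (fderiv ℝ F p) p := fun p =>
    ((hf.differentiable (by simp)) p).hasFDerivAt
  have hdf2 : HasFDerivAt (fderiv ℝ F) (fderiv ℝ (fderiv ℝ F) (x, y)) (x, y) :=
    (((hf.fderiv_right (m := (⊤ : ℕ∞)) (by simp)).differentiable (by simp)) (x, y)).hasFDerivAt
  have hsymm := second_derivative_symmetric hdf hdf2 ((1:ℝ), (0:ℝ)) ((0:ℝ), (1:ℝ))
  -- pdx (pdy f) x y = f'' (1,0) (0,1)
  have key : ∀ v : ℝ × ℝ, ∀ w : ℝ × ℝ, ∀ g : ℝ → ℝ × ℝ, ∀ z : ℝ,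
      HasDerivAt g w z →
      HasDerivAt (fun t => fderiv ℝ F (g t) v) (fderiv ℝ (fderiv ℝ F) (x, y) w v) z →
      True := fun _ _ _ _ _ _ => trivial
  have h1 : HasDerivAt (fun t : ℝ => fderiv ℝ F (t, y) ((0:ℝ), (1:ℝ)))
      (fderiv ℝ (fderiv ℝ F) (x, y) ((1:ℝ),(0:ℝ)) ((0:ℝ),(1:ℝ))) x := by
    have hline : HasDerivAt (fun t : ℝ => ((t, y) : ℝ × ℝ)) (1, 0) x := by
      simpa using (hasDerivAt_id x).prodMk (hasDerivAt_const x y)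
    have hc : HasDerivAt (fun t : ℝ => fderiv ℝ F (t, y))
        (fderiv ℝ (fderiv ℝ F) (x, y) ((1:ℝ),(0:ℝ))) x := hdf2.comp_hasDerivAt x hline
    simpa using hc.clm_apply (hasDerivAt_const x ((0:ℝ),(1:ℝ)))
  have h2 : HasDerivAt (fun t : ℝ => fderiv ℝ F (x, t) ((1:ℝ), (0:ℝ)))
      (fderiv ℝ (fderiv ℝ F) (x, y) ((0:ℝ),(1:ℝ)) ((1:ℝ),(0:ℝ))) y := by
    have hline : HasDerivAt (fun t : ℝ => ((x, t) : ℝ × ℝ)) (0, 1) y := by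
      simpa using (hasDerivAt_const y x).prodMk (hasDerivAt_id y)
    have hc : HasDerivAt (fun t : ℝ => fderiv ℝ F (x, t))
        (fderiv ℝ (fderiv ℝ F) (x, y) ((0:ℝ),(1:ℝ))) y := hdf2.comp_hasDerivAt y hline
    simpa using hc.clm_apply (hasDerivAt_const y ((1:ℝ),(0:ℝ)))
  have e1 : pdx (pdy f) x y
      = fderiv ℝ (fderiv ℝ F) (x, y) ((1:ℝ),(0:ℝ)) ((0:ℝ),(1:ℝ)) := by
    have : (fun t : ℝ => pdy f t y) = fun t : ℝ => fderiv ℝ F (t, y) ((0:ℝ),(1:ℝ)) := by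
      funext t; exact pdy_eq_fderiv hf t y
    rw [pdx, this]; exact h1.deriv
  have e2 : pdy (pdx f) x y
      = fderiv ℝ (fderiv ℝ F) (x, y) ((0:ℝ),(1:ℝ)) ((1:ℝ),(0:ℝ)) := by
    have : (fun t : ℝ => pdx f x t) = fun t : ℝ => fderiv ℝ F (x, t) ((1:ℝ),(0:ℝ)) := by
      funext t; exact pdx_eq_fderiv hf x t
    rw [pdy, this]; exact h2.deriv
  rw [e1, e2, hsymm]

/-- The Bäcklund system for the A₂ Toda system: if `W¹, W²` with `W¹_y < 0`, `W²ₓ < 0` satisfy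
`W¹ₓᵧ = −W¹ᵧ(W²ₓ + e^{W¹})` and `W²ₓᵧ = −W²ₓ(e^{W²} + W¹ᵧ)`, then
`U¹ = ⅔W¹ + ⅓W² + ⅓log(−(W¹ᵧ)²W²ₓ)` and `U² = ⅓W¹ + ⅔W² + ⅓log(−W¹ᵧ(W²ₓ)²)` solve the
A₂ Toda system `U¹ₓᵧ = e^{2U¹−U²}`, `U²ₓᵧ = e^{−U¹+2U²}`. -/
theorem toda_backlund (W₁ W₂ : ℝ → ℝ → ℝ)
    (hW₁ : ContDiff ℝ (⊤ : ℕ∞) (fun p : ℝ × ℝ => W₁ p.1 p.2))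
    (hW₂ : ContDiff ℝ (⊤ : ℕ∞) (fun p : ℝ × ℝ => W₂ p.1 p.2))
    (hW₁y : ∀ x y : ℝ, pdy W₁ x y < 0) (hW₂x : ∀ x y : ℝ, pdx W₂ x y < 0)
    (heq₁ : ∀ x y : ℝ, pdx (pdy W₁) x y
        = -(pdy W₁ x y) * (pdx W₂ x y + Real.exp (W₁ x y)))
    (heq₂ : ∀ x y : ℝ, pdx (pdy W₂) x y
        = -(pdx W₂ x y) * (Real.exp (W₂ x y) + pdy W₁ x y))
    (U₁ U₂ : ℝ → ℝ → ℝ)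
    (hU₁ : U₁ = fun x y => (2 / 3) * W₁ x y + (1 / 3) * W₂ x y
        + (1 / 3) * Real.log (-((pdy W₁ x y) ^ 2 * pdx W₂ x y)))
    (hU₂ : U₂ = fun x y => (1 / 3) * W₁ x y + (2 / 3) * W₂ x y
        + (1 / 3) * Real.log (-(pdy W₁ x y * (pdx W₂ x y) ^ 2))) :
    (∀ x y : ℝ, pdx (pdy U₁) x y = Real.exp (2 * U₁ x y - U₂ x y)) ∧
    (∀ x y : ℝ, pdx (pdy U₂) x y = Real.exp (-U₁ x y + 2 * U₂ x y)) := by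
  have hsW₁ : Sm W₁ := hW₁
  have hsW₂ : Sm W₂ := hW₂
  have sa : Sm (pdy W₁) := sm_pdy hsW₁
  have sb : Sm (pdx W₂) := sm_pdx hsW₂
  have sc : Sm (pdy W₂) := sm_pdy hsW₂
  have say : Sm (pdy (pdy W₁)) := sm_pdy sa
  have sby : Sm (pdy (pdx W₂)) := sm_pdy sb
  have hane : ∀ x y : ℝ, pdy W₁ x y ≠ 0 := fun x y => ne_of_lt (hW₁y x y)
  have hbne : ∀ x y : ℝ, pdx W₂ x y ≠ 0 := fun x y => ne_of_lt (hW₂x x y)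
  have hA : ∀ x y : ℝ, (0:ℝ) < -(pdy W₁ x y) := fun x y => neg_pos.mpr (hW₁y x y)
  have hB : ∀ x y : ℝ, (0:ℝ) < -(pdx W₂ x y) := fun x y => neg_pos.mpr (hW₂x x y)
  -- closed form for pdy (pdx W₂) via symmetry of second derivatives
  have hby : ∀ x y : ℝ, pdy (pdx W₂) x y
      = -(pdx W₂ x y) * (Real.exp (W₂ x y) + pdy W₁ x y) := by
    intro x y
    rw [← pdx_pdy_comm hsW₂]
    exact heq₂ x y
  -- closed form for pdx (pdy (pdy W₁))
  have hayx : ∀ x y : ℝ, pdx (pdy (pdy W₁)) x y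
      = -(pdy (pdy W₁) x y) * (pdx W₂ x y + Real.exp (W₁ x y))
        + -(pdy W₁ x y) * (pdy (pdx W₂) x y + Real.exp (W₁ x y) * pdy W₁ x y) := by
    intro x y
    rw [pdx_pdy_comm sa]
    have hfun : (fun t : ℝ => pdx (pdy W₁) x t)
        = fun t : ℝ => -(pdy W₁ x t) * (pdx W₂ x t + Real.exp (W₁ x t)) :=
      funext fun t => heq₁ x t
    show deriv (fun t : ℝ => pdx (pdy W₁) x t) y = _
    rw [hfun]
    exact ((hasDerivAt_pdy sa x y).neg.mul
      ((hasDerivAt_pdy sb x y).add (hasDerivAt_pdy hsW₁ x y).exp)).deriv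
  -- closed form for pdx (pdy (pdx W₂))
  have hbyx : ∀ x y : ℝ, pdx (pdy (pdx W₂)) x y
      = -(pdx (pdx W₂) x y) * (Real.exp (W₂ x y) + pdy W₁ x y)
        + -(pdx W₂ x y) * (Real.exp (W₂ x y) * pdx W₂ x y + pdx (pdy W₁) x y) := by
    intro x y
    have hfun : (fun t : ℝ => pdy (pdx W₂) t y)
        = fun t : ℝ => -(pdx W₂ t y) * (Real.exp (W₂ t y) + pdy W₁ t y) :=
      funext fun t => hby t y
    show deriv (fun t : ℝ => pdy (pdx W₂) t y) x = _
    rw [hfun]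
    exact ((hasDerivAt_pdx sb x y).neg.mul
      (((hasDerivAt_pdx hsW₂ x y).exp).add (hasDerivAt_pdx sa x y))).deriv
  -- first partial in y of U₁
  have hE₁ : ∀ x y : ℝ, pdy U₁ x y
      = (2/3 : ℝ) * pdy W₁ x y + (1/3 : ℝ) * pdy W₂ x y
        + (2/3 : ℝ) * (pdy (pdy W₁) x y / pdy W₁ x y)
        + (1/3 : ℝ) * (pdy (pdx W₂) x y / pdx W₂ x y) := by
    intro x y
    have hpos : (0:ℝ) < -((pdy W₁ x y) ^ 2 * pdx W₂ x y) := by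
      nlinarith [mul_pos (mul_pos (hA x y) (hA x y)) (hB x y)]
    have inner := (((hasDerivAt_pdy sa x y).pow 2).mul (hasDerivAt_pdy sb x y)).neg
    have hlog := inner.log (ne_of_gt hpos)
    have H := (((hasDerivAt_pdy hsW₁ x y).const_mul ((2:ℝ)/3)).add
      ((hasDerivAt_pdy hsW₂ x y).const_mul ((1:ℝ)/3))).add (hlog.const_mul ((1:ℝ)/3))
    have H' : HasDerivAt (fun t : ℝ => (2/3 : ℝ) * W₁ x t + (1/3 : ℝ) * W₂ x t
        + (1/3 : ℝ) * Real.log (-((pdy W₁ x t) ^ 2 * pdx W₂ x t)))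
        ((2/3 : ℝ) * pdy W₁ x y + (1/3 : ℝ) * pdy W₂ x y
          + (2/3 : ℝ) * (pdy (pdy W₁) x y / pdy W₁ x y)
          + (1/3 : ℝ) * (pdy (pdx W₂) x y / pdx W₂ x y)) y := by
      refine H.congr_deriv ?_
      simp only [Pi.neg_apply, Pi.mul_apply, Pi.pow_apply]
      push_cast
      field_simp [hane x y, hbne x y]
      ring
    rw [hU₁]
    exact H'.deriv
  -- first partial in y of U₂
  have hE₂ : ∀ x y : ℝ, pdy U₂ x y
      = (1/3 : ℝ) * pdy W₁ x y + (2/3 : ℝ) * pdy W₂ x y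
        + (1/3 : ℝ) * (pdy (pdy W₁) x y / pdy W₁ x y)
        + (2/3 : ℝ) * (pdy (pdx W₂) x y / pdx W₂ x y) := by
    intro x y
    have hpos : (0:ℝ) < -(pdy W₁ x y * (pdx W₂ x y) ^ 2) := by
      nlinarith [mul_pos (mul_pos (hA x y) (hB x y)) (hB x y)]
    have inner := ((hasDerivAt_pdy sa x y).mul ((hasDerivAt_pdy sb x y).pow 2)).neg
    have hlog := inner.log (ne_of_gt hpos)
    have H := (((hasDerivAt_pdy hsW₁ x y).const_mul ((1:ℝ)/3)).add
      ((hasDerivAt_pdy hsW₂ x y).const_mul ((2:ℝ)/3))).add (hlog.const_mul ((1:ℝ)/3))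
    have H' : HasDerivAt (fun t : ℝ => (1/3 : ℝ) * W₁ x t + (2/3 : ℝ) * W₂ x t
        + (1/3 : ℝ) * Real.log (-(pdy W₁ x t * (pdx W₂ x t) ^ 2)))
        ((1/3 : ℝ) * pdy W₁ x y + (2/3 : ℝ) * pdy W₂ x y
          + (1/3 : ℝ) * (pdy (pdy W₁) x y / pdy W₁ x y)
          + (2/3 : ℝ) * (pdy (pdx W₂) x y / pdx W₂ x y)) y := by
      refine H.congr_deriv ?_
      simp only [Pi.neg_apply, Pi.mul_apply, Pi.pow_apply]
      push_cast
      field_simp [hane x y, hbne x y]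
      ring
    rw [hU₂]
    exact H'.deriv
  constructor
  · intro x y
    have hfun : (fun t : ℝ => pdy U₁ t y) = fun t : ℝ =>
        (2/3 : ℝ) * pdy W₁ t y + (1/3 : ℝ) * pdy W₂ t y
          + (2/3 : ℝ) * (pdy (pdy W₁) t y / pdy W₁ t y)
          + (1/3 : ℝ) * (pdy (pdx W₂) t y / pdx W₂ t y) :=
      funext fun t => hE₁ t y
    have T1 := (hasDerivAt_pdx sa x y).const_mul ((2:ℝ)/3)
    have T2 := (hasDerivAt_pdx sc x y).const_mul ((1:ℝ)/3)
    have T3 := ((hasDerivAt_pdx say x y).div (hasDerivAt_pdx sa x y)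
      (hane x y)).const_mul ((2:ℝ)/3)
    have T4 := ((hasDerivAt_pdx sby x y).div (hasDerivAt_pdx sb x y)
      (hbne x y)).const_mul ((1:ℝ)/3)
    have H := ((T1.add T2).add T3).add T4
    have H' : HasDerivAt (fun t : ℝ =>
        (2/3 : ℝ) * pdy W₁ t y + (1/3 : ℝ) * pdy W₂ t y
          + (2/3 : ℝ) * (pdy (pdy W₁) t y / pdy W₁ t y)
          + (1/3 : ℝ) * (pdy (pdx W₂) t y / pdx W₂ t y))
        ((2/3 : ℝ) * pdx (pdy W₁) x y + (1/3 : ℝ) * pdx (pdy W₂) x y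
          + (2/3 : ℝ) * ((pdx (pdy (pdy W₁)) x y * pdy W₁ x y
              - pdy (pdy W₁) x y * pdx (pdy W₁) x y) / (pdy W₁ x y) ^ 2)
          + (1/3 : ℝ) * ((pdx (pdy (pdx W₂)) x y * pdx W₂ x y
              - pdy (pdx W₂) x y * pdx (pdx W₂) x y) / (pdx W₂ x y) ^ 2)) x := by
      exact H
    have harg : 2 * U₁ x y - U₂ x y = W₁ x y + Real.log (-(pdy W₁ x y)) := by
      rw [hU₁, hU₂]
      show 2 * ((2/3:ℝ) * W₁ x y + (1/3:ℝ) * W₂ x y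
          + (1/3:ℝ) * Real.log (-((pdy W₁ x y) ^ 2 * pdx W₂ x y)))
          - ((1/3:ℝ) * W₁ x y + (2/3:ℝ) * W₂ x y
          + (1/3:ℝ) * Real.log (-(pdy W₁ x y * (pdx W₂ x y) ^ 2)))
          = W₁ x y + Real.log (-(pdy W₁ x y))
      rw [show -((pdy W₁ x y) ^ 2 * pdx W₂ x y)
            = (-(pdy W₁ x y)) ^ 2 * (-(pdx W₂ x y)) by ring,
          show -(pdy W₁ x y * (pdx W₂ x y) ^ 2)
            = (-(pdy W₁ x y)) * (-(pdx W₂ x y)) ^ 2 by ring,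
          Real.log_mul (pow_ne_zero 2 (ne_of_gt (hA x y))) (ne_of_gt (hB x y)),
          Real.log_mul (ne_of_gt (hA x y)) (pow_ne_zero 2 (ne_of_gt (hB x y))),
          Real.log_pow, Real.log_pow]
      push_cast
      ring
    show deriv (fun t : ℝ => pdy U₁ t y) x = _
    rw [hfun, H'.deriv, harg, Real.exp_add, Real.exp_log (hA x y),
        hayx x y, hbyx x y, hby x y, heq₁ x y, heq₂ x y]
    field_simp [hane x y, hbne x y]
    ring
  · intro x y
    have hfun : (fun t : ℝ => pdy U₂ t y) = fun t : ℝ =>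
        (1/3 : ℝ) * pdy W₁ t y + (2/3 : ℝ) * pdy W₂ t y
          + (1/3 : ℝ) * (pdy (pdy W₁) t y / pdy W₁ t y)
          + (2/3 : ℝ) * (pdy (pdx W₂) t y / pdx W₂ t y) :=
      funext fun t => hE₂ t y
    have T1 := (hasDerivAt_pdx sa x y).const_mul ((1:ℝ)/3)
    have T2 := (hasDerivAt_pdx sc x y).const_mul ((2:ℝ)/3)
    have T3 := ((hasDerivAt_pdx say x y).div (hasDerivAt_pdx sa x y)
      (hane x y)).const_mul ((1:ℝ)/3)
    have T4 := ((hasDerivAt_pdx sby x y).div (hasDerivAt_pdx sb x y)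
      (hbne x y)).const_mul ((2:ℝ)/3)
    have H := ((T1.add T2).add T3).add T4
    have H' : HasDerivAt (fun t : ℝ =>
        (1/3 : ℝ) * pdy W₁ t y + (2/3 : ℝ) * pdy W₂ t y
          + (1/3 : ℝ) * (pdy (pdy W₁) t y / pdy W₁ t y)
          + (2/3 : ℝ) * (pdy (pdx W₂) t y / pdx W₂ t y))
        ((1/3 : ℝ) * pdx (pdy W₁) x y + (2/3 : ℝ) * pdx (pdy W₂) x y
          + (1/3 : ℝ) * ((pdx (pdy (pdy W₁)) x y * pdy W₁ x y
              - pdy (pdy W₁) x y * pdx (pdy W₁) x y) / (pdy W₁ x y) ^ 2)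
          + (2/3 : ℝ) * ((pdx (pdy (pdx W₂)) x y * pdx W₂ x y
              - pdy (pdx W₂) x y * pdx (pdx W₂) x y) / (pdx W₂ x y) ^ 2)) x := by
      exact H
    have harg : -U₁ x y + 2 * U₂ x y = W₂ x y + Real.log (-(pdx W₂ x y)) := by
      rw [hU₁, hU₂]
      show -((2/3:ℝ) * W₁ x y + (1/3:ℝ) * W₂ x y
          + (1/3:ℝ) * Real.log (-((pdy W₁ x y) ^ 2 * pdx W₂ x y)))
          + 2 * ((1/3:ℝ) * W₁ x y + (2/3:ℝ) * W₂ x y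
          + (1/3:ℝ) * Real.log (-(pdy W₁ x y * (pdx W₂ x y) ^ 2)))
          = W₂ x y + Real.log (-(pdx W₂ x y))
      rw [show -((pdy W₁ x y) ^ 2 * pdx W₂ x y)
            = (-(pdy W₁ x y)) ^ 2 * (-(pdx W₂ x y)) by ring,
          show -(pdy W₁ x y * (pdx W₂ x y) ^ 2)
            = (-(pdy W₁ x y)) * (-(pdx W₂ x y)) ^ 2 by ring,
          Real.log_mul (pow_ne_zero 2 (ne_of_gt (hA x y))) (ne_of_gt (hB x y)),
          Real.log_mul (ne_of_gt (hA x y)) (pow_ne_zero 2 (ne_of_gt (hB x y))),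
          Real.log_pow, Real.log_pow]
      push_cast
      ring
    show deriv (fun t : ℝ => pdy U₂ t y) x = _
    rw [hfun, H'.deriv, harg, Real.exp_add, Real.exp_log (hB x y),
        hayx x y, hbyx x y, hby x y, heq₁ x y, heq₂ x y]
    field_simp [hane x y, hbne x y]
    ring
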